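/- arXiv:1909.05112 — 2 statements merged into one kernel-verified Lean document; each statement's English description precedes it below -/
import Mathlib

section
/- Let (ξ_i, 𝓕_i)_{i=1..n} be a martingale difference sequence satisfying E[|ξ_i|^{2+ρ} e^{ξ_i⁺/ε} | 𝓕_{i-1}] ≤ ε^ρ E[ξ_i² | 𝓕_{i-1}] a.s. for some ρ ∈ (0,1] and ε ∈ (0, 1/2], and suppose |Σ_{i=1}^n E[ξ_i² | 𝓕_{i-1}] − 1| ≤ δ² a.s. for some δ ∈ [0, 1/2]. Then for every λ with 0 ≤ λ ≤ 1/ε, the conjugate drift B_n(λ) = Σ_{i=1}^n E[ξ_i e^{λξ_i} | 𝓕_{i-1}] / E[e^{λξ_i} | 𝓕_{i-1}] satisfies |B_n(λ) − λ| ≤ λδ² + 6 λ^{1+ρ} ε^ρ almost surely. -/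
/-!
Write `F`, `G`, `V`, `A` for the conditional expectations of `ξ e^{λξ}`, `e^{λξ}`, `ξ²` and
`|ξ|^{2+ρ} e^{ξ⁺/ε}` given `𝓕_{i-1}`. Second-order Taylor bounds for `exp`, with the weight
`e^{ξ⁺/ε}` absorbing large values of `λξ ≤ ξ/ε`, give `|F - λV| ≤ λ^{1+ρ} A` and
`G - 1 ≤ (3/4) λ² V + λ² ε^{-ρ} A ≤ (7/4) λ² V`, while conditional Jensen turns `A ≤ ε^ρ V`
into `V ≤ ε²`. As `G ≥ 1`, `F / G` is within `F (G - 1) = O(λ³ V²) = O(λ^{1+ρ} ε^ρ V)` of `F`,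
so every summand of the drift is `λ V_i + O(λ^{1+ρ} ε^ρ V_i)`; summing and using
`∑ V_i = 1 ± δ²` gives the bound.
-/

open MeasureTheory Finset Real

namespace Real

lemma abs_exp_sub_one_sub_le_of_abs_le_one {t : ℝ} (ht : |t| ≤ 1) :
    |exp t - 1 - t| ≤ 3 / 4 * t ^ 2 := by
  have h := exp_bound ht (n := 2) (by norm_num)
  simp only [sum_range_succ, sum_range_zero, Nat.factorial] at h
  calc |exp t - 1 - t| = |exp t - (1 + t)| := by ring_nf
    _ ≤ |t| ^ 2 * (3 / 4) := by convert h using 2 <;> norm_num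
    _ = 3 / 4 * t ^ 2 := by rw [sq_abs]; ring

lemma abs_exp_sub_one_sub_le_abs_mul_exp_max (t : ℝ) :
    |exp t - 1 - t| ≤ |t| * exp (max t 0) := by
  have h₁ := add_one_le_exp t
  rcases le_total t 0 with ht | ht
  · rw [max_eq_right ht, exp_zero, abs_of_nonpos ht, abs_of_nonneg (by linarith)]
    linarith [exp_le_one_iff.2 ht]
  · have h₂ : exp t * (1 - t) ≤ 1 := by
      have := mul_le_mul_of_nonneg_left (add_one_le_exp (-t)) (exp_pos t).le
      rwa [← exp_add, add_neg_cancel, exp_zero, neg_add_eq_sub] at this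
    rw [max_eq_left ht, abs_of_nonneg ht, abs_of_nonneg (by linarith)]
    nlinarith

lemma abs_exp_sub_one_sub_le_rpow_mul_exp_max {ρ : ℝ} (hρ0 : 0 ≤ ρ) (hρ1 : ρ ≤ 1) (t : ℝ) :
    |exp t - 1 - t| ≤ |t| ^ (1 + ρ) * exp (max t 0) := by
  have hexp : 1 ≤ exp (max t 0) := one_le_exp (le_max_right t 0)
  rcases le_total |t| 1 with ht | ht
  · have hsq : |t| ^ (2 : ℝ) ≤ |t| ^ (1 + ρ) :=
      rpow_le_rpow_of_exponent_ge' (abs_nonneg t) ht (by linarith) (by linarith)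
    rw [rpow_two, sq_abs] at hsq
    calc |exp t - 1 - t| ≤ 3 / 4 * t ^ 2 := abs_exp_sub_one_sub_le_of_abs_le_one ht
      _ ≤ |t| ^ (1 + ρ) * 1 := by nlinarith [sq_nonneg t]
      _ ≤ |t| ^ (1 + ρ) * exp (max t 0) := by gcongr
  · have hpow : |t| ≤ |t| ^ (1 + ρ) := by
      simpa using rpow_le_rpow_of_exponent_le ht (by linarith : (1 : ℝ) ≤ 1 + ρ)
    calc |exp t - 1 - t| ≤ |t| * exp (max t 0) := abs_exp_sub_one_sub_le_abs_mul_exp_max t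
      _ ≤ |t| ^ (1 + ρ) * exp (max t 0) := by gcongr

end Real

lemma max_mul_le_max_div {ε lam : ℝ} (hε : 0 < ε) (hlam0 : 0 ≤ lam)
    (hlam1 : lam ≤ 1 / ε) (x : ℝ) : max (lam * x) 0 ≤ max x 0 / ε := by
  refine max_le ?_ (div_nonneg (le_max_right x 0) hε.le)
  calc lam * x ≤ lam * max x 0 := by gcongr; exact le_max_left x 0
    _ ≤ 1 / ε * max x 0 := by gcongr
    _ = max x 0 / ε := by ring

lemma abs_mul_exp_mul_sub_le {ρ ε lam : ℝ} (hρ0 : 0 ≤ ρ) (hρ1 : ρ ≤ 1) (hε : 0 < ε)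
    (hlam0 : 0 ≤ lam) (hlam1 : lam ≤ 1 / ε) (x : ℝ) :
    |x * exp (lam * x) - x - lam * x ^ 2|
      ≤ lam ^ (1 + ρ) * (|x| ^ (2 + ρ) * exp (max x 0 / ε)) := by
  have hpow : |x| * |lam * x| ^ (1 + ρ) = lam ^ (1 + ρ) * |x| ^ (2 + ρ) := by
    rw [abs_mul, abs_of_nonneg hlam0, mul_rpow hlam0 (abs_nonneg x),
      show (2 : ℝ) + ρ = 1 + (1 + ρ) by ring,
      rpow_one_add' (abs_nonneg x) (y := 1 + ρ) (by linarith)]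
    ring
  calc |x * exp (lam * x) - x - lam * x ^ 2| = |x| * |exp (lam * x) - 1 - lam * x| := by
        rw [← abs_mul]; ring_nf
    _ ≤ |x| * (|lam * x| ^ (1 + ρ) * exp (max (lam * x) 0)) := by
        gcongr; exact abs_exp_sub_one_sub_le_rpow_mul_exp_max hρ0 hρ1 _
    _ ≤ |x| * (|lam * x| ^ (1 + ρ) * exp (max x 0 / ε)) := by
        gcongr; exact max_mul_le_max_div hε hlam0 hlam1 x
    _ = lam ^ (1 + ρ) * (|x| ^ (2 + ρ) * exp (max x 0 / ε)) := by
        rw [← mul_assoc, hpow, mul_assoc]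

lemma exp_mul_sub_one_sub_le {ρ ε lam : ℝ} (hρ0 : 0 ≤ ρ) (hε : 0 < ε)
    (hlam0 : 0 ≤ lam) (hlam1 : lam ≤ 1 / ε) (x : ℝ) :
    exp (lam * x) - 1 - lam * x
      ≤ 3 / 4 * lam ^ 2 * x ^ 2 + lam ^ 2 / ε ^ ρ * (|x| ^ (2 + ρ) * exp (max x 0 / ε)) := by
  rcases le_or_gt |lam * x| 1 with ht | ht
  · have h := (abs_le.1 (abs_exp_sub_one_sub_le_of_abs_le_one ht)).2
    have : 0 ≤ lam ^ 2 / ε ^ ρ * (|x| ^ (2 + ρ) * exp (max x 0 / ε)) := by positivity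
    nlinarith
  · have hεx : ε ≤ |x| := by
      rw [abs_mul, abs_of_nonneg hlam0] at ht
      rw [le_div_iff₀ hε] at hlam1
      nlinarith
    have hxpow : x ^ 2 * ε ^ ρ ≤ |x| ^ (2 + ρ) := by
      rw [rpow_add (hε.trans_le hεx), rpow_two, sq_abs]
      gcongr
    have hsq : |lam * x| ≤ (lam * x) ^ 2 := by
      rw [← sq_abs]; nlinarith
    calc exp (lam * x) - 1 - lam * x ≤ |lam * x| * exp (max (lam * x) 0) :=
          (abs_le.1 (abs_exp_sub_one_sub_le_abs_mul_exp_max _)).2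
      _ ≤ (lam * x) ^ 2 * exp (max x 0 / ε) := by
          gcongr
          exact max_mul_le_max_div hε hlam0 hlam1 x
      _ = lam ^ 2 / ε ^ ρ * (x ^ 2 * ε ^ ρ * exp (max x 0 / ε)) := by
          field_simp
      _ ≤ lam ^ 2 / ε ^ ρ * (|x| ^ (2 + ρ) * exp (max x 0 / ε)) := by gcongr
      _ ≤ _ := le_add_of_nonneg_left (by positivity)

lemma le_mul_exp_mul {lam : ℝ} (hlam : 0 ≤ lam) (x : ℝ) : x ≤ x * exp (lam * x) := by
  have : 0 ≤ x * (exp (lam * x) - 1) := by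
    rcases le_total 0 x with hx | hx
    · exact mul_nonneg hx (sub_nonneg.2 (one_le_exp (mul_nonneg hlam hx)))
    · exact mul_nonneg_of_nonpos_of_nonpos hx
        (sub_nonpos.2 (exp_le_one_iff.2 (mul_nonpos_of_nonneg_of_nonpos hlam hx)))
  linarith [mul_sub x (exp (lam * x)) 1]

lemma le_sq_of_rpow_le_rpow_mul {ρ ε v : ℝ} (hρ : 0 < ρ) (hε : 0 ≤ ε) (hv : 0 ≤ v)
    (h : v ^ ((2 + ρ) / 2) ≤ ε ^ ρ * v) : v ≤ ε ^ 2 := by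
  rcases hv.eq_or_lt with rfl | hv
  · positivity
  have hsplit : v ^ ((2 + ρ) / 2) = v ^ (ρ / 2) * v := by
    rw [show (2 + ρ) / 2 = ρ / 2 + 1 by ring, rpow_add hv, rpow_one]
  have hεsq : ε ^ ρ = (ε ^ 2) ^ (ρ / 2) := by
    rw [← rpow_natCast_mul hε]; ring_nf
  rw [hsplit, hεsq] at h
  exact (rpow_le_rpow_iff hv.le (sq_nonneg ε) (by positivity)).1 (le_of_mul_le_mul_right h hv)

lemma rpow_one_add_mul_rpow {ρ ε lam : ℝ} (hρ : 0 ≤ ρ) (hε : 0 ≤ ε) (hlam : 0 ≤ lam) :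
    lam ^ (1 + ρ) * ε ^ ρ = lam * (lam * ε) ^ ρ := by
  rw [rpow_add' hlam (by linarith), rpow_one, mul_rpow hlam hε]
  ring

lemma abs_div_sub_le_of_abs_sub_le {f g a b c : ℝ} (hg : 1 ≤ g) (hf : 0 ≤ f)
    (hfa : |f - a| ≤ b) (hfg : f * (g - 1) ≤ c) : |f / g - a| ≤ b + c := by
  have hg0 : 0 < g := one_pos.trans_le hg
  -- since `g * (2 - g) ≤ 1`
  have hlow : f - f * (g - 1) ≤ f / g := by
    rw [le_div_iff₀ hg0]; nlinarith [sq_nonneg (g - 1)]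
  have hup : f / g ≤ f := div_le_self hf hg
  rw [abs_le] at hfa ⊢
  constructor <;> linarith [hfa.1, hfa.2]

lemma abs_div_sub_mul_le {f g v lam ε κ : ℝ} (hlam : 0 ≤ lam) (hv0 : 0 ≤ v)
    (hvε : v ≤ ε ^ 2) (hg : 1 ≤ g) (hf : 0 ≤ f) (hfv : |f - lam * v| ≤ κ * v)
    (hgv : g - 1 ≤ 7 / 4 * lam ^ 2 * v) (hκlam : κ ≤ lam) (hκ : lam ^ 3 * ε ^ 2 ≤ κ) :
    |f / g - lam * v| ≤ 9 / 2 * κ * v := by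
  have hf2 : f ≤ 2 * lam * v := by
    nlinarith [(abs_le.1 hfv).2, mul_le_mul_of_nonneg_right hκlam hv0]
  have hcross : f * (g - 1) ≤ 7 / 2 * κ * v := by
    calc f * (g - 1) ≤ 2 * lam * v * (7 / 4 * lam ^ 2 * v) := by
          gcongr
      _ = 7 / 2 * (lam ^ 3 * (v * v)) := by ring
      _ ≤ 7 / 2 * (lam ^ 3 * (ε ^ 2 * v)) := by gcongr
      _ ≤ 7 / 2 * κ * v := by nlinarith
  linarith [abs_div_sub_le_of_abs_sub_le hg hf hfv hcross]

lemma abs_sum_sub_le_of_abs_sub_le {ι : Type*} (s : Finset ι) {y v : ι → ℝ} {lam C δ : ℝ}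
    (hlam : 0 ≤ lam) (hC : 0 ≤ C) (hy : ∀ i ∈ s, |y i - lam * v i| ≤ C * v i)
    (hv : |∑ i ∈ s, v i - 1| ≤ δ ^ 2) :
    |∑ i ∈ s, y i - lam| ≤ lam * δ ^ 2 + C * (1 + δ ^ 2) := by
  have hsum : ∑ i ∈ s, y i - lam = ∑ i ∈ s, (y i - lam * v i) + lam * (∑ i ∈ s, v i - 1) := by
    rw [sum_sub_distrib, ← mul_sum]; ring
  calc |∑ i ∈ s, y i - lam|
      ≤ ∑ i ∈ s, |y i - lam * v i| + lam * |∑ i ∈ s, v i - 1| := by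
        rw [hsum, ← abs_of_nonneg hlam, ← abs_mul, abs_of_nonneg hlam]
        exact (abs_add_le _ _).trans (add_le_add_left (abs_sum_le_sum_abs _ _) _)
    _ ≤ C * ∑ i ∈ s, v i + lam * δ ^ 2 := by
        rw [mul_sum]; gcongr with i hi; exact hy i hi
    _ ≤ lam * δ ^ 2 + C * (1 + δ ^ 2) := by
        nlinarith [(abs_le.1 hv).2]

section CondExp

variable {Ω : Type*} {m m0 : MeasurableSpace Ω} {μ : Measure Ω} {X f g k : Ω → ℝ}

lemma condExp_const_mul (c : ℝ) (f : Ω → ℝ) :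
    μ[fun ω => c * f ω|m] =ᵐ[μ] fun ω => c * μ[f|m] ω :=
  condExp_smul c f m

lemma condExp_add_const_mul (hf : Integrable f μ) (hg : Integrable g μ) (c : ℝ) :
    μ[fun ω => f ω + c * g ω|m] =ᵐ[μ] fun ω => μ[f|m] ω + c * μ[g|m] ω := by
  filter_upwards [condExp_add hf (hg.const_mul c) m, condExp_const_mul (μ := μ) (m := m) c g]
    with ω hadd hmul
  rw [← hmul]
  exact hadd

lemma ae_condExp_le_add_of_le_add (hf : Integrable f μ) (hg : Integrable g μ)
    (hk : Integrable k μ) (h : ∀ ω, f ω ≤ g ω + k ω) :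
    ∀ᵐ ω ∂μ, μ[f|m] ω ≤ μ[g|m] ω + μ[k|m] ω := by
  filter_upwards [condExp_mono (m := m) hf (hg.add hk) (Filter.Eventually.of_forall h),
    condExp_add hg hk m] with ω hle hadd
  rwa [hadd] at hle

lemma condExp_one_add_const_mul [IsFiniteMeasure μ] (hm : m ≤ m0) (hX : Integrable X μ)
    (hmd : μ[X|m] =ᵐ[μ] 0) (c : ℝ) : μ[fun ω => 1 + c * X ω|m] =ᵐ[μ] 1 := by
  filter_upwards [condExp_add_const_mul (m := m) (integrable_const (1 : ℝ)) hX c, hmd]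
    with ω h h0
  rw [h, condExp_const hm, h0]
  simp

lemma ae_one_le_condExp_exp_mul [IsFiniteMeasure μ] (hm : m ≤ m0) (hX : Integrable X μ)
    (hmd : μ[X|m] =ᵐ[μ] 0) {lam : ℝ} (hXexp : Integrable (fun ω => exp (lam * X ω)) μ) :
    ∀ᵐ ω ∂μ, 1 ≤ μ[fun ω => exp (lam * X ω)|m] ω := by
  have hlin : Integrable (fun ω => 1 + lam * X ω) μ := (integrable_const 1).add (hX.const_mul lam)
  filter_upwards [condExp_mono (m := m) hlin hXexp
      (Filter.Eventually.of_forall fun ω => by linarith [add_one_le_exp (lam * X ω)]),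
    condExp_one_add_const_mul hm hX hmd lam] with ω hle h1
  simpa [h1] using hle

lemma ae_condExp_mul_exp_mul_nonneg (hX : Integrable X μ) (hmd : μ[X|m] =ᵐ[μ] 0) {lam : ℝ}
    (hlam : 0 ≤ lam) (hXmul : Integrable (fun ω => X ω * exp (lam * X ω)) μ) :
    ∀ᵐ ω ∂μ, 0 ≤ μ[fun ω => X ω * exp (lam * X ω)|m] ω := by
  filter_upwards [condExp_mono (m := m) hX hXmul
      (Filter.Eventually.of_forall fun ω => le_mul_exp_mul hlam (X ω)), hmd] with ω hle h0
  simpa [h0] using hle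

lemma ae_condExp_sq_le_sq {ρ ε : ℝ} (hρ : 0 < ρ) (hε : 0 < ε)
    (hX2 : Integrable (fun ω => X ω ^ 2) μ)
    (hXA : Integrable (fun ω => |X ω| ^ (2 + ρ) * exp (max (X ω) 0 / ε)) μ)
    (hA : ∀ᵐ ω ∂μ, μ[fun ω => |X ω| ^ (2 + ρ) * exp (max (X ω) 0 / ε)|m] ω
      ≤ ε ^ ρ * μ[fun ω => X ω ^ 2|m] ω) :
    ∀ᵐ ω ∂μ, μ[fun ω => X ω ^ 2|m] ω ≤ ε ^ 2 := by
  have hnorm : (fun ω => ‖X ω ^ 2‖ ^ ((2 + ρ) / 2)) = fun ω => |X ω| ^ (2 + ρ) := by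
    ext ω
    rw [norm_pow, norm_eq_abs, ← rpow_natCast_mul (abs_nonneg _)]
    ring_nf
  have hle : ∀ ω, |X ω| ^ (2 + ρ) ≤ |X ω| ^ (2 + ρ) * exp (max (X ω) 0 / ε) := fun ω =>
    le_mul_of_one_le_right (by positivity) (one_le_exp (by positivity))
  have hXr : Integrable (fun ω => ‖X ω ^ 2‖ ^ ((2 + ρ) / 2)) μ := by
    have := hX2.aestronglyMeasurable
    refine hXA.mono' (by fun_prop (disch := linarith)) (Filter.Eventually.of_forall fun ω => ?_)
    rw [norm_of_nonneg (by positivity), congrFun hnorm ω]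
    exact hle ω
  -- conditional Jensen for `y ↦ |y| ^ ((2 + ρ) / 2)` applied to `X ^ 2`
  have hJensen := Integrable.norm_condExp_rpow_le (m := m) (by linarith) hXr
  rw [hnorm] at hXr hJensen
  filter_upwards [hJensen, condExp_mono (m := m) hXr hXA (Filter.Eventually.of_forall hle), hA,
    condExp_nonneg (m := m) (Filter.Eventually.of_forall fun ω => sq_nonneg (X ω))]
    with ω hJ hmono hAω hV
  rw [norm_of_nonneg hV] at hJ
  exact le_sq_of_rpow_le_rpow_mul hρ hε.le hV (hJ.trans (hmono.trans hAω))

lemma ae_abs_condExp_mul_exp_mul_sub_le {ρ ε lam : ℝ} (hρ0 : 0 ≤ ρ) (hρ1 : ρ ≤ 1)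
    (hε : 0 < ε) (hlam0 : 0 ≤ lam) (hlam1 : lam ≤ 1 / ε) (hX : Integrable X μ)
    (hmd : μ[X|m] =ᵐ[μ] 0) (hX2 : Integrable (fun ω => X ω ^ 2) μ)
    (hXA : Integrable (fun ω => |X ω| ^ (2 + ρ) * exp (max (X ω) 0 / ε)) μ)
    (hXmul : Integrable (fun ω => X ω * exp (lam * X ω)) μ) :
    ∀ᵐ ω ∂μ, |μ[fun ω => X ω * exp (lam * X ω)|m] ω - lam * μ[fun ω => X ω ^ 2|m] ω|
      ≤ lam ^ (1 + ρ) * μ[fun ω => |X ω| ^ (2 + ρ) * exp (max (X ω) 0 / ε)|m] ω := by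
  have hbound := fun ω => abs_le.1 (abs_mul_exp_mul_sub_le hρ0 hρ1 hε hlam0 hlam1 (X ω))
  have hquad : Integrable (fun ω => X ω + lam * X ω ^ 2) μ := hX.add (hX2.const_mul lam)
  have hrem := hXA.const_mul (lam ^ (1 + ρ))
  filter_upwards [ae_condExp_le_add_of_le_add (m := m) hXmul hquad hrem
      fun ω => by linarith [(hbound ω).2],
    ae_condExp_le_add_of_le_add (m := m) hquad hXmul hrem fun ω => by linarith [(hbound ω).1],
    condExp_add_const_mul (m := m) hX hX2 lam, condExp_const_mul (μ := μ) (m := m)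
      (lam ^ (1 + ρ)) (fun ω => |X ω| ^ (2 + ρ) * exp (max (X ω) 0 / ε)), hmd]
    with ω hup hdown hquadω hremω h0
  rw [hquadω, hremω, h0, Pi.zero_apply, zero_add] at hup hdown
  rw [abs_le]
  constructor <;> linarith

lemma ae_condExp_exp_mul_sub_one_le [IsFiniteMeasure μ] (hm : m ≤ m0) {ρ ε lam : ℝ}
    (hρ0 : 0 ≤ ρ) (hε : 0 < ε) (hlam0 : 0 ≤ lam) (hlam1 : lam ≤ 1 / ε) (hX : Integrable X μ)
    (hmd : μ[X|m] =ᵐ[μ] 0) (hX2 : Integrable (fun ω => X ω ^ 2) μ)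
    (hXA : Integrable (fun ω => |X ω| ^ (2 + ρ) * exp (max (X ω) 0 / ε)) μ)
    (hXexp : Integrable (fun ω => exp (lam * X ω)) μ) :
    ∀ᵐ ω ∂μ, μ[fun ω => exp (lam * X ω)|m] ω - 1
      ≤ 3 / 4 * lam ^ 2 * μ[fun ω => X ω ^ 2|m] ω
        + lam ^ 2 / ε ^ ρ * μ[fun ω => |X ω| ^ (2 + ρ) * exp (max (X ω) 0 / ε)|m] ω := by
  have hlin : Integrable (fun ω => 1 + lam * X ω) μ := (integrable_const 1).add (hX.const_mul lam)
  have hsq := hX2.const_mul (3 / 4 * lam ^ 2)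
  have hrem : Integrable (fun ω => 3 / 4 * lam ^ 2 * X ω ^ 2
      + lam ^ 2 / ε ^ ρ * (|X ω| ^ (2 + ρ) * exp (max (X ω) 0 / ε))) μ :=
    hsq.add (hXA.const_mul (lam ^ 2 / ε ^ ρ))
  filter_upwards [ae_condExp_le_add_of_le_add (m := m) hXexp hlin hrem
      fun ω => by linarith [exp_mul_sub_one_sub_le hρ0 hε hlam0 hlam1 (X ω)],
    condExp_one_add_const_mul hm hX hmd lam,
    condExp_add_const_mul (m := m) hsq hXA (lam ^ 2 / ε ^ ρ),
    condExp_const_mul (μ := μ) (m := m) (3 / 4 * lam ^ 2) (fun ω => X ω ^ 2)]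
    with ω hle h1 hremω hsqω
  rw [h1, hremω, hsqω] at hle
  simp only [Pi.one_apply] at hle
  linarith

lemma ae_abs_condExp_tilted_mean_sub_le [IsFiniteMeasure μ] (hm : m ≤ m0) {ρ ε lam : ℝ}
    (hρ0 : 0 < ρ) (hρ1 : ρ ≤ 1) (hε : 0 < ε) (hlam0 : 0 ≤ lam) (hlam1 : lam ≤ 1 / ε)
    (hX : Integrable X μ) (hmd : μ[X|m] =ᵐ[μ] 0) (hX2 : Integrable (fun ω => X ω ^ 2) μ)
    (hXA : Integrable (fun ω => |X ω| ^ (2 + ρ) * exp (max (X ω) 0 / ε)) μ)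
    (hXexp : Integrable (fun ω => exp (lam * X ω)) μ)
    (hXmul : Integrable (fun ω => X ω * exp (lam * X ω)) μ)
    (hA : ∀ᵐ ω ∂μ, μ[fun ω => |X ω| ^ (2 + ρ) * exp (max (X ω) 0 / ε)|m] ω
      ≤ ε ^ ρ * μ[fun ω => X ω ^ 2|m] ω) :
    ∀ᵐ ω ∂μ, |μ[fun ω => X ω * exp (lam * X ω)|m] ω / μ[fun ω => exp (lam * X ω)|m] ω
        - lam * μ[fun ω => X ω ^ 2|m] ω|
      ≤ 9 / 2 * (lam ^ (1 + ρ) * ε ^ ρ) * μ[fun ω => X ω ^ 2|m] ω := by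
  have hκ := rpow_one_add_mul_rpow hρ0.le hε.le hlam0
  have hlamε : lam * ε ≤ 1 := (le_div_iff₀ hε).1 hlam1
  have hκlam : lam ^ (1 + ρ) * ε ^ ρ ≤ lam := by
    rw [hκ]
    exact mul_le_of_le_one_right hlam0 (rpow_le_one (by positivity) hlamε hρ0.le)
  have hκcube : lam ^ 3 * ε ^ 2 ≤ lam ^ (1 + ρ) * ε ^ ρ := by
    rw [hκ]
    calc lam ^ 3 * ε ^ 2 = lam * (lam * ε) ^ (2 : ℝ) := by rw [rpow_two]; ring
      _ ≤ lam * (lam * ε) ^ ρ := mul_le_mul_of_nonneg_left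
          (rpow_le_rpow_of_exponent_ge' (by positivity) hlamε hρ0.le (by linarith)) hlam0
  filter_upwards [ae_condExp_sq_le_sq (m := m) hρ0 hε hX2 hXA hA,
    ae_one_le_condExp_exp_mul hm hX hmd hXexp, ae_condExp_mul_exp_mul_nonneg hX hmd hlam0 hXmul,
    ae_abs_condExp_mul_exp_mul_sub_le hρ0.le hρ1 hε hlam0 hlam1 hX hmd hX2 hXA hXmul,
    ae_condExp_exp_mul_sub_one_le hm hρ0.le hε hlam0 hlam1 hX hmd hX2 hXA hXexp,
    condExp_nonneg (m := m) (Filter.Eventually.of_forall fun ω => sq_nonneg (X ω)), hA]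
    with ω hVε hG hF hFV hGV hV hAω
  refine abs_div_sub_mul_le hlam0 hV hVε hG hF ?_ ?_ hκlam hκcube
  · calc _ ≤ _ := hFV
      _ ≤ lam ^ (1 + ρ) * (ε ^ ρ * μ[fun ω => X ω ^ 2|m] ω) := by gcongr
      _ = _ := by ring
  · calc _ ≤ _ := hGV
      _ ≤ 3 / 4 * lam ^ 2 * μ[fun ω => X ω ^ 2|m] ω
          + lam ^ 2 / ε ^ ρ * (ε ^ ρ * μ[fun ω => X ω ^ 2|m] ω) := by gcongr
      _ = _ := by field_simp; ring

end CondExp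

theorem conjugate_drift_bound_general
    {Ω : Type*} {m0 : MeasurableSpace Ω} (μ : Measure Ω) [IsProbabilityMeasure μ]
    (n : ℕ) (ξ : ℕ → Ω → ℝ) (𝓕 : ℕ → MeasurableSpace Ω)
    (h𝓕le : ∀ i, 𝓕 i ≤ m0)
    (ρ ε δ : ℝ) (hρ0 : 0 < ρ) (hρ1 : ρ ≤ 1)
    (hε0 : 0 < ε) (hδ0 : 0 ≤ δ) (hδ1 : δ ≤ 1 / 2)
    (hint : ∀ i ∈ Icc 1 n, Integrable (ξ i) μ)
    (hmd : ∀ i ∈ Icc 1 n, μ[ξ i|𝓕 (i - 1)] =ᵐ[μ] 0)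
    (hintsq : ∀ i ∈ Icc 1 n, Integrable (fun ω => (ξ i ω) ^ 2) μ)
    (hintA1 : ∀ i ∈ Icc 1 n,
      Integrable (fun ω => |ξ i ω| ^ (2 + ρ) * Real.exp (max (ξ i ω) 0 / ε)) μ)
    (hA1 : ∀ i ∈ Icc 1 n, ∀ᵐ ω ∂μ,
      (μ[fun ω => |ξ i ω| ^ (2 + ρ) * Real.exp (max (ξ i ω) 0 / ε)|𝓕 (i - 1)]) ω
        ≤ ε ^ ρ * (μ[fun ω => (ξ i ω) ^ 2|𝓕 (i - 1)]) ω)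
    (hA2 : ∀ᵐ ω ∂μ,
      |(∑ i ∈ Icc 1 n, (μ[fun ω => (ξ i ω) ^ 2|𝓕 (i - 1)]) ω) - 1| ≤ δ ^ 2)
    (lam : ℝ) (hlam0 : 0 ≤ lam) (hlam1 : lam ≤ 1 / ε)
    (hintexp : ∀ i ∈ Icc 1 n, Integrable (fun ω => Real.exp (lam * ξ i ω)) μ)
    (hintmulexp : ∀ i ∈ Icc 1 n,
      Integrable (fun ω => ξ i ω * Real.exp (lam * ξ i ω)) μ) :
    ∀ᵐ ω ∂μ,
      |(∑ i ∈ Icc 1 n,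
          (μ[fun ω => ξ i ω * Real.exp (lam * ξ i ω)|𝓕 (i - 1)]) ω
            / (μ[fun ω => Real.exp (lam * ξ i ω)|𝓕 (i - 1)]) ω) - lam|
        ≤ lam * δ ^ 2 + 6 * lam ^ (1 + ρ) * ε ^ ρ := by
  have hstep : ∀ i ∈ Icc 1 n, ∀ᵐ ω ∂μ,
      |(μ[fun ω => ξ i ω * exp (lam * ξ i ω)|𝓕 (i - 1)]) ω
          / (μ[fun ω => exp (lam * ξ i ω)|𝓕 (i - 1)]) ω
        - lam * (μ[fun ω => ξ i ω ^ 2|𝓕 (i - 1)]) ω|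
      ≤ 9 / 2 * (lam ^ (1 + ρ) * ε ^ ρ) * (μ[fun ω => ξ i ω ^ 2|𝓕 (i - 1)]) ω :=
    fun i hi => ae_abs_condExp_tilted_mean_sub_le (h𝓕le (i - 1)) hρ0 hρ1 hε0 hlam0 hlam1
      (hint i hi) (hmd i hi) (hintsq i hi) (hintA1 i hi) (hintexp i hi) (hintmulexp i hi)
      (hA1 i hi)
  filter_upwards [(Filter.eventually_all_finset _).2 hstep, hA2] with ω hω hsum
  have hκ : 0 ≤ lam ^ (1 + ρ) * ε ^ ρ := by positivity
  have hδ : δ ^ 2 ≤ 1 / 4 := by nlinarith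
  calc _ ≤ lam * δ ^ 2 + 9 / 2 * (lam ^ (1 + ρ) * ε ^ ρ) * (1 + δ ^ 2) :=
        abs_sum_sub_le_of_abs_sub_le _ hlam0 (by positivity) hω hsum
    _ ≤ lam * δ ^ 2 + 6 * lam ^ (1 + ρ) * ε ^ ρ := by nlinarith

theorem conjugate_drift_bound
    {Ω : Type*} {m0 : MeasurableSpace Ω} (μ : Measure Ω) [IsProbabilityMeasure μ]
    (n : ℕ) (ξ : ℕ → Ω → ℝ) (𝓕 : ℕ → MeasurableSpace Ω)
    (h𝓕le : ∀ i, 𝓕 i ≤ m0) (h𝓕mono : Monotone 𝓕)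
    (ρ ε δ : ℝ) (hρ0 : 0 < ρ) (hρ1 : ρ ≤ 1)
    (hε0 : 0 < ε) (hε1 : ε ≤ 1 / 2) (hδ0 : 0 ≤ δ) (hδ1 : δ ≤ 1 / 2)
    (hmeas : ∀ i ∈ Icc 1 n, Measurable[𝓕 i] (ξ i))
    (hint : ∀ i ∈ Icc 1 n, Integrable (ξ i) μ)
    (hmd : ∀ i ∈ Icc 1 n, μ[ξ i|𝓕 (i - 1)] =ᵐ[μ] 0)
    (hintsq : ∀ i ∈ Icc 1 n, Integrable (fun ω => (ξ i ω) ^ 2) μ)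
    (hintA1 : ∀ i ∈ Icc 1 n,
      Integrable (fun ω => |ξ i ω| ^ (2 + ρ) * Real.exp (max (ξ i ω) 0 / ε)) μ)
    (hA1 : ∀ i ∈ Icc 1 n, ∀ᵐ ω ∂μ,
      (μ[fun ω => |ξ i ω| ^ (2 + ρ) * Real.exp (max (ξ i ω) 0 / ε)|𝓕 (i - 1)]) ω
        ≤ ε ^ ρ * (μ[fun ω => (ξ i ω) ^ 2|𝓕 (i - 1)]) ω)
    (hA2 : ∀ᵐ ω ∂μ,
      |(∑ i ∈ Icc 1 n, (μ[fun ω => (ξ i ω) ^ 2|𝓕 (i - 1)]) ω) - 1| ≤ δ ^ 2)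
    (lam : ℝ) (hlam0 : 0 ≤ lam) (hlam1 : lam ≤ 1 / ε)
    (hintexp : ∀ i ∈ Icc 1 n, Integrable (fun ω => Real.exp (lam * ξ i ω)) μ)
    (hintmulexp : ∀ i ∈ Icc 1 n,
      Integrable (fun ω => ξ i ω * Real.exp (lam * ξ i ω)) μ) :
    ∀ᵐ ω ∂μ,
      |(∑ i ∈ Icc 1 n,
          (μ[fun ω => ξ i ω * Real.exp (lam * ξ i ω)|𝓕 (i - 1)]) ω
            / (μ[fun ω => Real.exp (lam * ξ i ω)|𝓕 (i - 1)]) ω) - lam|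
        ≤ lam * δ ^ 2 + 6 * lam ^ (1 + ρ) * ε ^ ρ :=
  conjugate_drift_bound_general μ n ξ 𝓕 h𝓕le ρ ε δ hρ0 hρ1 hε0 hδ0 hδ1 hint hmd hintsq hintA1 hA1
    hA2 lam hlam0 hlam1 hintexp hintmulexp
end

section
/- Under the same conditions (martingale differences ξ_i with E[|ξ_i|^{2+ρ} e^{ξ_i⁺/ε} | 𝓕_{i-1}] ≤ ε^ρ E[ξ_i² | 𝓕_{i-1}] a.s., ρ ∈ (0,1], ε ∈ (0,1/2], and |Σ E[ξ_i²|𝓕_{i-1}] − 1| ≤ δ², δ ∈ [0,1/2]), the cumulant process Ψ_n(λ) = Σ_{i=1}^n log E[e^{λξ_i} | 𝓕_{i-1}] satisfies, for all 0 ≤ λ ≤ 1/ε, |Ψ_n(λ) − λ²/2| ≤ c λ^{2+ρ} ε^ρ + λ²δ²/2 almost surely, for some absolute constant c. -/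
/-!
Taylor's formula with a `(2 + ρ)`-remainder, `|eˣ - 1 - x - x²/2| ≤ |x|^(2+ρ) e^(x⁺)`, taken at
`x = λ ξᵢ` and conditioned on `𝓕ᵢ₋₁`, gives `E[e^(λξᵢ) | 𝓕ᵢ₋₁] = 1 + λ² Vᵢ / 2 + O(λ^(2+ρ) ε^ρ Vᵢ)`
with `Vᵢ = E[ξᵢ² | 𝓕ᵢ₋₁]`; the hypothesis `λ ≤ 1/ε` is what lets `e^(λξᵢ⁺)` be absorbed into
`e^(ξᵢ⁺/ε)`. Conditional Jensen applied to the moment hypothesis gives `Vᵢ^(1+ρ/2) ≤ ε^ρ Vᵢ`, i.e.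
`Vᵢ ≤ ε²`, so `λ² Vᵢ ≤ (λε)^ρ` and the quadratic error of `log (1 + t) = t + O(t²)` is of the same
order. Summing over `i` and using `|∑ Vᵢ - 1| ≤ δ²` gives the bound with `c = 5`.
-/

open MeasureTheory Finset

namespace Real

lemma abs_exp_sub_taylor_two_le_of_abs_le_one {x : ℝ} (hx : |x| ≤ 1) :
    |exp x - 1 - x - x ^ 2 / 2| ≤ |x| ^ 3 := by
  have h := exp_bound hx (n := 3) (by norm_num)
  norm_num [Finset.sum_range_succ, Nat.factorial] at h
  calc |exp x - 1 - x - x ^ 2 / 2| = |exp x - (1 + x + x ^ 2 / 2)| := by ring_nf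
    _ ≤ |x| ^ 3 * (2 / 9) := h
    _ ≤ |x| ^ 3 := by nlinarith [pow_nonneg (abs_nonneg x) 3]

lemma abs_exp_sub_taylor_two_le {ρ : ℝ} (hρ0 : 0 ≤ ρ) (hρ1 : ρ ≤ 1) (x : ℝ) :
    |exp x - 1 - x - x ^ 2 / 2| ≤ |x| ^ (2 + ρ) * exp (max x 0) := by
  have hexp : 1 ≤ exp (max x 0) := one_le_exp (le_max_right _ _)
  rcases le_or_gt |x| 1 with hx | hx
  · calc |exp x - 1 - x - x ^ 2 / 2| ≤ |x| ^ (3 : ℝ) := by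
          exact_mod_cast abs_exp_sub_taylor_two_le_of_abs_le_one hx
      _ ≤ |x| ^ (2 + ρ) :=
          rpow_le_rpow_of_exponent_ge' (abs_nonneg x) hx (by positivity) (by linarith)
      _ ≤ |x| ^ (2 + ρ) * exp (max x 0) := le_mul_of_one_le_right (by positivity) hexp
  have hsq : x ^ 2 ≤ |x| ^ (2 + ρ) := by
    rw [← sq_abs, ← rpow_two]
    exact rpow_le_rpow_of_exponent_le hx.le (by linarith)
  rcases le_total 0 x with h0 | h0
  · rw [max_eq_left h0, show exp x - 1 - x - x ^ 2 / 2 = exp x - (1 + x + x ^ 2 / 2) by ring]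
    calc |exp x - (1 + x + x ^ 2 / 2)| ≤ exp x :=
          abs_sub_le_of_nonneg_of_le (exp_pos x).le le_rfl (by positivity)
            (quadratic_le_exp_of_nonneg h0)
      _ ≤ |x| ^ (2 + ρ) * exp x := le_mul_of_one_le_left (exp_pos x).le (by nlinarith [sq_abs x])
  · -- for `x ≤ -1` both `exp x - 1 - x ∈ [0, -x]` and `x ^ 2 / 2` lie in `[0, x ^ 2]`
    rw [max_eq_right h0, exp_zero, mul_one]
    have habs : |x| = -x := abs_of_nonpos h0
    have hlin : exp x - 1 - x ≤ x ^ 2 := by nlinarith [exp_le_one_iff.2 h0]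
    refine (abs_sub_le_of_nonneg_of_le ?_ hlin (by positivity) (by linarith [sq_nonneg x])).trans
      hsq
    linarith [add_one_le_exp x]

lemma abs_log_sub_le_of_abs_sub_le {Y q r : ℝ} (hY : 1 ≤ Y) (h : |Y - (1 + q)| ≤ r) :
    |log Y - q| ≤ r + (q + r) ^ 2 := by
  obtain ⟨hlo, hhi⟩ := abs_le.1 h
  set t := Y - 1 with ht
  have ht0 : 0 ≤ t := by linarith
  have hupper : log Y ≤ t := log_le_sub_one_of_pos (by linarith)
  have hlower : t - t ^ 2 ≤ log Y := by
    refine le_trans ?_ (one_sub_inv_le_log_of_pos (by linarith))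
    have hinv : (1 + t)⁻¹ ≤ 1 - t + t ^ 2 := by
      rw [inv_le_iff_one_le_mul₀ (by linarith)]
      nlinarith [pow_nonneg ht0 3]
    rw [show Y = 1 + t by ring]
    linarith
  have ht2 : t ^ 2 ≤ (q + r) ^ 2 := pow_le_pow_left₀ ht0 (by linarith) 2
  rw [abs_le]
  constructor <;> nlinarith

end Real

open Real

lemma abs_log_sub_half_sq_mul_le {Y V lam ε ρ : ℝ} (hρ0 : 0 ≤ ρ) (hρ2 : ρ ≤ 2)
    (hlam : 0 ≤ lam) (hε : 0 ≤ ε) (hlamε : lam * ε ≤ 1) (hY : 1 ≤ Y) (hV : 0 ≤ V)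
    (hVε : V ≤ ε ^ 2) (hYV : |Y - (1 + lam ^ 2 / 2 * V)| ≤ lam ^ (2 + ρ) * ε ^ ρ * V) :
    |log Y - lam ^ 2 / 2 * V| ≤ 13 / 4 * lam ^ (2 + ρ) * ε ^ ρ * V := by
  set s := (lam * ε) ^ ρ with hs
  have hK : lam ^ (2 + ρ) * ε ^ ρ = lam ^ 2 * s := by
    rw [hs, mul_rpow hlam hε, rpow_add' hlam (by linarith), rpow_two]
    ring
  have hs1 : s ≤ 1 := rpow_le_one (by positivity) hlamε hρ0
  have hs2 : (lam * ε) ^ 2 ≤ s := by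
    rw [← rpow_two]
    exact rpow_le_rpow_of_exponent_ge' (by positivity) hlamε hρ0 hρ2
  -- `λ² V ≤ (λ ε)² ≤ (λ ε) ^ ρ` makes the quadratic error of the logarithm of order `λ^(2+ρ) ε^ρ V`
  have hquad : (lam ^ 2 * V) ^ 2 ≤ lam ^ 2 * s * V := by
    have : lam ^ 2 * V ≤ s := by nlinarith [sq_nonneg lam]
    calc (lam ^ 2 * V) ^ 2 = lam ^ 2 * V * (lam ^ 2 * V) := sq _
      _ ≤ lam ^ 2 * V * s := mul_le_mul_of_nonneg_left this (by positivity)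
      _ = lam ^ 2 * s * V := by ring
  refine (abs_log_sub_le_of_abs_sub_le hY hYV).trans ?_
  rw [hK] at hYV ⊢
  have hr : lam ^ 2 * s * V ≤ lam ^ 2 * V :=
    mul_le_mul_of_nonneg_right (mul_le_of_le_one_right (sq_nonneg _) hs1) hV
  have hsum : (lam ^ 2 / 2 * V + lam ^ 2 * s * V) ^ 2 ≤ 9 / 4 * (lam ^ 2 * V) ^ 2 := by
    have h0 : 0 ≤ lam ^ 2 * s * V := by positivity
    nlinarith
  nlinarith

lemma abs_exp_mul_sub_taylor_two_le {ρ ε lam : ℝ} (hρ0 : 0 ≤ ρ) (hρ1 : ρ ≤ 1)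
    (hlam : 0 ≤ lam) (hlamε : lam ≤ 1 / ε) (x : ℝ) :
    |exp (lam * x) - (1 + lam * x + lam ^ 2 / 2 * x ^ 2)|
      ≤ lam ^ (2 + ρ) * (|x| ^ (2 + ρ) * exp (max x 0 / ε)) := by
  have hmax : max (lam * x) 0 ≤ max x 0 / ε := by
    rw [show max (lam * x) 0 = lam * max x 0 by rw [mul_max_of_nonneg _ _ hlam, mul_zero],
      div_eq_inv_mul]
    exact mul_le_mul_of_nonneg_right (by rwa [← one_div]) (le_max_right _ _)
  calc |exp (lam * x) - (1 + lam * x + lam ^ 2 / 2 * x ^ 2)|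
      = |exp (lam * x) - 1 - lam * x - (lam * x) ^ 2 / 2| := by ring_nf
    _ ≤ |lam * x| ^ (2 + ρ) * exp (max (lam * x) 0) := abs_exp_sub_taylor_two_le hρ0 hρ1 _
    _ ≤ |lam * x| ^ (2 + ρ) * exp (max x 0 / ε) := by gcongr
    _ = lam ^ (2 + ρ) * (|x| ^ (2 + ρ) * exp (max x 0 / ε)) := by
      rw [abs_mul, abs_of_nonneg hlam, mul_rpow hlam (abs_nonneg x), mul_assoc]

lemma le_sq_of_rpow_one_add_half_le_mul {V ε ρ : ℝ} (hV : 0 ≤ V) (hε : 0 ≤ ε) (hρ : 0 < ρ)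
    (h : V ^ (1 + ρ / 2) ≤ ε ^ ρ * V) : V ≤ ε ^ 2 := by
  rcases hV.eq_or_lt with rfl | hV
  · positivity
  have h' : V ^ (ρ / 2) ≤ (ε ^ 2) ^ (ρ / 2) := by
    rw [rpow_add hV, rpow_one, mul_comm, mul_le_mul_iff_left₀ hV] at h
    rwa [← rpow_natCast, ← rpow_mul hε, Nat.cast_ofNat, mul_div_cancel₀ _ two_ne_zero]
  exact (rpow_le_rpow_iff hV.le (by positivity) (by positivity)).1 h'

section CondExp

variable {Ω : Type*} {m m0 : MeasurableSpace Ω} {μ : Measure Ω} {ζ : Ω → ℝ}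

lemma ae_abs_condExp_le_of_abs_le {f g : Ω → ℝ} (hf : Integrable f μ) (hg : Integrable g μ)
    (hfg : ∀ ω, |f ω| ≤ g ω) : ∀ᵐ ω ∂μ, |μ[f|m] ω| ≤ μ[g|m] ω := by
  filter_upwards [condExp_mono (m := m) hf hg (.of_forall fun ω => (abs_le.1 (hfg ω)).2),
    condExp_mono (m := m) hg.neg hf (.of_forall fun ω => neg_le_of_abs_le (hfg ω)),
    condExp_neg g m] with ω hup hdown hneg
  rw [hneg, Pi.neg_apply] at hdown
  exact abs_le.2 ⟨by linarith, hup⟩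

lemma condExp_sq_le_sq_of_condExp_le {ρ ε : ℝ} {g : Ω → ℝ} (hm : m ≤ m0)
    [SigmaFinite (μ.trim hm)] (hζ : AEMeasurable ζ μ) (hρ : 0 < ρ) (hε : 0 ≤ ε)
    (hg : Integrable g μ) (hζg : ∀ ω, |ζ ω| ^ (2 + ρ) ≤ g ω)
    (hbnd : ∀ᵐ ω ∂μ, μ[g|m] ω ≤ ε ^ ρ * μ[fun ω => ζ ω ^ 2|m] ω) :
    ∀ᵐ ω ∂μ, μ[fun ω => ζ ω ^ 2|m] ω ≤ ε ^ 2 := by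
  have hnorm : (fun ω => ‖ζ ω ^ 2‖ ^ (1 + ρ / 2)) = fun ω => |ζ ω| ^ (2 + ρ) := by
    funext ω
    rw [norm_eq_abs, abs_pow, ← rpow_natCast, ← rpow_mul (abs_nonneg _)]
    congr 1
    ring
  have hint : Integrable (fun ω => |ζ ω| ^ (2 + ρ)) μ :=
    hg.mono' (hζ.abs.pow_const _).aestronglyMeasurable
      (.of_forall fun ω => by rw [norm_eq_abs, abs_of_nonneg (by positivity)]; exact hζg ω)
  have hjensen := Integrable.norm_condExp_rpow_le (m := m) (f := fun ω => ζ ω ^ 2)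
    (p := 1 + ρ / 2) (by linarith) (hnorm ▸ hint)
  filter_upwards [hjensen, condExp_mono (m := m) hint hg (.of_forall hζg), hbnd,
    condExp_nonneg (m := m) (.of_forall fun ω => sq_nonneg (ζ ω))] with ω hJ hmono hb hV
  rw [hnorm, norm_of_nonneg hV] at hJ
  exact le_sq_of_rpow_one_add_half_le_mul hV hε hρ (hJ.trans (hmono.trans hb))

variable [IsFiniteMeasure μ]

lemma condExp_one_add_mul_ae_eq_one (hm : m ≤ m0) (hζ : Integrable ζ μ)
    (hcond : μ[ζ|m] =ᵐ[μ] 0) (a : ℝ) : μ[fun ω => 1 + a * ζ ω|m] =ᵐ[μ] 1 := by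
  filter_upwards [condExp_add (m := m) (integrable_const (1 : ℝ)) (hζ.const_mul a),
    condExp_smul (m := m) a ζ, hcond] with ω hadd hsmul hzero
  calc μ[fun ω => 1 + a * ζ ω|m] ω = (μ[fun _ => (1 : ℝ)|m] + μ[fun x => a * ζ x|m]) ω := hadd
    _ = 1 + a * μ[ζ|m] ω := by rw [Pi.add_apply, condExp_const hm]; exact congrArg _ hsmul
    _ = 1 := by simp [hzero]

lemma one_le_condExp_exp_mul {lam : ℝ} (hm : m ≤ m0) (hζ : Integrable ζ μ)
    (hcond : μ[ζ|m] =ᵐ[μ] 0) (hexp : Integrable (fun ω => exp (lam * ζ ω)) μ) :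
    ∀ᵐ ω ∂μ, 1 ≤ μ[fun ω => exp (lam * ζ ω)|m] ω := by
  filter_upwards [condExp_mono (m := m) (f := fun ω => 1 + lam * ζ ω)
      ((integrable_const 1).add (hζ.const_mul lam)) hexp
      (.of_forall fun ω => by linarith [add_one_le_exp (lam * ζ ω)]),
    condExp_one_add_mul_ae_eq_one hm hζ hcond lam] with ω hle heq
  rwa [heq] at hle

lemma condExp_sub_taylor_two_ae_eq {f : Ω → ℝ} (hm : m ≤ m0) (hζ : Integrable ζ μ)
    (hζ2 : Integrable (fun ω => ζ ω ^ 2) μ) (hf : Integrable f μ) (hcond : μ[ζ|m] =ᵐ[μ] 0)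
    (a b : ℝ) :
    μ[fun ω => f ω - (1 + a * ζ ω + b * ζ ω ^ 2)|m]
      =ᵐ[μ] fun ω => μ[f|m] ω - (1 + b * μ[fun ω => ζ ω ^ 2|m] ω) := by
  have hlin : Integrable (fun ω => 1 + a * ζ ω) μ := (integrable_const 1).add (hζ.const_mul a)
  filter_upwards [condExp_sub (m := m) hf (hlin.add (hζ2.const_mul b)),
    condExp_add (m := m) hlin (hζ2.const_mul b), condExp_smul (m := m) b (fun ω => ζ ω ^ 2),
    condExp_one_add_mul_ae_eq_one hm hζ hcond a] with ω hsub hadd hsmul hone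
  have hsmul' : μ[fun ω => b * ζ ω ^ 2|m] ω = b * μ[fun ω => ζ ω ^ 2|m] ω := hsmul
  calc μ[fun ω => f ω - (1 + a * ζ ω + b * ζ ω ^ 2)|m] ω
      = μ[f|m] ω - (μ[fun ω => 1 + a * ζ ω|m] ω + μ[fun ω => b * ζ ω ^ 2|m] ω) := by
        rw [← Pi.add_apply, ← hadd, ← Pi.sub_apply, ← hsub]; rfl
    _ = μ[f|m] ω - (1 + b * μ[fun ω => ζ ω ^ 2|m] ω) := by rw [hone, hsmul', Pi.one_apply]

lemma abs_log_condExp_exp_mul_sub_le {ρ ε lam : ℝ} (hm : m ≤ m0) (hρ0 : 0 < ρ) (hρ1 : ρ ≤ 1)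
    (hε : 0 < ε) (hlam : 0 ≤ lam) (hlamε : lam ≤ 1 / ε) (hζ : Integrable ζ μ)
    (hζ2 : Integrable (fun ω => ζ ω ^ 2) μ)
    (hg : Integrable (fun ω => |ζ ω| ^ (2 + ρ) * exp (max (ζ ω) 0 / ε)) μ)
    (hexp : Integrable (fun ω => exp (lam * ζ ω)) μ) (hcond : μ[ζ|m] =ᵐ[μ] 0)
    (hbnd : ∀ᵐ ω ∂μ, μ[fun ω => |ζ ω| ^ (2 + ρ) * exp (max (ζ ω) 0 / ε)|m] ω
      ≤ ε ^ ρ * μ[fun ω => ζ ω ^ 2|m] ω) :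
    ∀ᵐ ω ∂μ, |log (μ[fun ω => exp (lam * ζ ω)|m] ω) - lam ^ 2 / 2 * μ[fun ω => ζ ω ^ 2|m] ω|
      ≤ 13 / 4 * lam ^ (2 + ρ) * ε ^ ρ * μ[fun ω => ζ ω ^ 2|m] ω := by
  have hremainder := ae_abs_condExp_le_of_abs_le (m := m)
    (f := fun ω => exp (lam * ζ ω) - (1 + lam * ζ ω + lam ^ 2 / 2 * ζ ω ^ 2))
    (g := fun ω => lam ^ (2 + ρ) * (|ζ ω| ^ (2 + ρ) * exp (max (ζ ω) 0 / ε)))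
    (hexp.sub (((integrable_const 1).add (hζ.const_mul lam)).add (hζ2.const_mul _)))
    (hg.const_mul _) (fun ω => abs_exp_mul_sub_taylor_two_le hρ0.le hρ1 hlam hlamε (ζ ω))
  have hmoment : ∀ ω, |ζ ω| ^ (2 + ρ) ≤ |ζ ω| ^ (2 + ρ) * exp (max (ζ ω) 0 / ε) := fun ω =>
    le_mul_of_one_le_right (by positivity) (one_le_exp (by positivity))
  filter_upwards [hremainder, condExp_sub_taylor_two_ae_eq hm hζ hζ2 hexp hcond lam (lam ^ 2 / 2),
    condExp_smul (m := m) (lam ^ (2 + ρ)) (fun ω => |ζ ω| ^ (2 + ρ) * exp (max (ζ ω) 0 / ε)),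
    hbnd, one_le_condExp_exp_mul hm hζ hcond hexp,
    condExp_nonneg (m := m) (.of_forall fun ω => sq_nonneg (ζ ω)),
    condExp_sq_le_sq_of_condExp_le hm hζ.aemeasurable hρ0 hε.le hg hmoment hbnd]
    with ω hR hTaylor hsmul hb hY hV hVε
  rw [hTaylor] at hR
  refine abs_log_sub_half_sq_mul_le hρ0.le (by linarith) hlam hε.le
    ((le_div_iff₀ hε).1 hlamε) hY hV hVε ?_
  calc _ ≤ _ := hR
    _ = lam ^ (2 + ρ) * μ[fun ω => |ζ ω| ^ (2 + ρ) * exp (max (ζ ω) 0 / ε)|m] ω := hsmul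
    _ ≤ lam ^ (2 + ρ) * (ε ^ ρ * μ[fun ω => ζ ω ^ 2|m] ω) := by gcongr
    _ = lam ^ (2 + ρ) * ε ^ ρ * μ[fun ω => ζ ω ^ 2|m] ω := by ring

end CondExp

lemma abs_sum_sub_le_of_abs_sub_le_s14 {ι : Type*} {s : Finset ι} {a V : ι → ℝ} {q C δ : ℝ}
    (hq : 0 ≤ q) (h : ∀ i ∈ s, |a i - q * V i| ≤ C * V i) (hV : |∑ i ∈ s, V i - 1| ≤ δ) :
    |∑ i ∈ s, a i - q| ≤ C * ∑ i ∈ s, V i + q * δ := by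
  calc |∑ i ∈ s, a i - q| = |∑ i ∈ s, (a i - q * V i) + q * (∑ i ∈ s, V i - 1)| := by
        rw [sum_sub_distrib, ← mul_sum]; ring_nf
    _ ≤ ∑ i ∈ s, |a i - q * V i| + q * δ := by
        refine (abs_add_le _ _).trans (add_le_add (abs_sum_le_sum_abs _ _) ?_)
        rw [abs_mul, abs_of_nonneg hq]
        exact mul_le_mul_of_nonneg_left hV hq
    _ ≤ ∑ i ∈ s, C * V i + q * δ := by gcongr with i hi; exact h i hi
    _ = C * ∑ i ∈ s, V i + q * δ := by rw [mul_sum]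

theorem cumulant_process_bound :
    ∃ c : ℝ, 0 < c ∧
      ∀ (Ω : Type) (m0 : MeasurableSpace Ω) (μ : Measure Ω),
        IsProbabilityMeasure μ →
      ∀ (n : ℕ) (ξ : ℕ → Ω → ℝ) (𝓕 : ℕ → MeasurableSpace Ω),
        (∀ i, 𝓕 i ≤ m0) → Monotone 𝓕 →
      ∀ (ρ ε δ : ℝ), 0 < ρ → ρ ≤ 1 → 0 < ε → ε ≤ 1 / 2 → 0 ≤ δ → δ ≤ 1 / 2 →
        (∀ i ∈ Icc 1 n, Measurable[𝓕 i] (ξ i)) →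
        (∀ i ∈ Icc 1 n, Integrable (ξ i) μ) →
        (∀ i ∈ Icc 1 n, μ[ξ i|𝓕 (i - 1)] =ᵐ[μ] 0) →
        (∀ i ∈ Icc 1 n, Integrable (fun ω => (ξ i ω) ^ 2) μ) →
        (∀ i ∈ Icc 1 n,
          Integrable (fun ω => |ξ i ω| ^ (2 + ρ) * Real.exp (max (ξ i ω) 0 / ε)) μ) →
        (∀ i ∈ Icc 1 n, ∀ᵐ ω ∂μ,
          (μ[fun ω => |ξ i ω| ^ (2 + ρ) * Real.exp (max (ξ i ω) 0 / ε)|𝓕 (i - 1)]) ω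
            ≤ ε ^ ρ * (μ[fun ω => (ξ i ω) ^ 2|𝓕 (i - 1)]) ω) →
        (∀ᵐ ω ∂μ,
          |(∑ i ∈ Icc 1 n, (μ[fun ω => (ξ i ω) ^ 2|𝓕 (i - 1)]) ω) - 1| ≤ δ ^ 2) →
      ∀ (lam : ℝ), 0 ≤ lam → lam ≤ 1 / ε →
        (∀ i ∈ Icc 1 n, Integrable (fun ω => Real.exp (lam * ξ i ω)) μ) →
        ∀ᵐ ω ∂μ,
          |(∑ i ∈ Icc 1 n,
              Real.log ((μ[fun ω => Real.exp (lam * ξ i ω)|𝓕 (i - 1)]) ω))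
              - lam ^ 2 / 2|
            ≤ c * lam ^ (2 + ρ) * ε ^ ρ + lam ^ 2 * δ ^ 2 / 2 := by
  refine ⟨5, by norm_num, ?_⟩
  intro Ω m0 μ _ n ξ 𝓕 h𝓕 _ ρ ε δ hρ0 hρ1 hε _ hδ0 hδ1 _ hξ hcond hξ2 hg hbnd hsum
    lam hlam hlamε hexp
  have hstep : ∀ᵐ ω ∂μ, ∀ i ∈ Icc 1 n,
      |log (μ[fun ω => exp (lam * ξ i ω)|𝓕 (i - 1)] ω)
          - lam ^ 2 / 2 * μ[fun ω => ξ i ω ^ 2|𝓕 (i - 1)] ω|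
        ≤ 13 / 4 * lam ^ (2 + ρ) * ε ^ ρ * μ[fun ω => ξ i ω ^ 2|𝓕 (i - 1)] ω :=
    (Filter.eventually_all_finset _).2 fun i hi =>
      abs_log_condExp_exp_mul_sub_le (h𝓕 (i - 1)) hρ0 hρ1 hε hlam hlamε (hξ i hi) (hξ2 i hi)
        (hg i hi) (hexp i hi) (hcond i hi) (hbnd i hi)
  filter_upwards [hstep, hsum] with ω hstep hsum
  have hK : 0 ≤ lam ^ (2 + ρ) * ε ^ ρ := by positivity
  have hV : ∑ i ∈ Icc 1 n, μ[fun ω => ξ i ω ^ 2|𝓕 (i - 1)] ω ≤ 5 / 4 := by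
    nlinarith [(abs_le.1 hsum).2]
  calc _ ≤ 13 / 4 * lam ^ (2 + ρ) * ε ^ ρ * ∑ i ∈ Icc 1 n, μ[fun ω => ξ i ω ^ 2|𝓕 (i - 1)] ω
        + lam ^ 2 / 2 * δ ^ 2 := abs_sum_sub_le_of_abs_sub_le_s14 (by positivity) hstep hsum
    _ ≤ 5 * lam ^ (2 + ρ) * ε ^ ρ + lam ^ 2 * δ ^ 2 / 2 := by nlinarith
end
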